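/- For the polynomials p_k and q_k and the centred mean-difference computed with unit step, (μδ p_k)(ξ) := (p_k(ξ+1) − p_k(ξ−1))/2 = q_{k−1}(ξ) for all k ≥ 1 (q_0 ≡ 1); iterating together with δ²p_k = p_{k−1} gives, for 1 ≤ m ≤ k, μδ^{2m−1} p_k = q_{k−m} pointwise, and μδ^{2m−1} p_k = 0 for m > k. -/

import Mathlib

/-
Reindexing the product by `i = m + k - 1` turns `p_{n+1}(ξ)` into the falling factorial
`(ξ + n)(ξ + n - 1)⋯(ξ - n)` of length `N = 2n + 1`, divided by `N!`. For a falling factorial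
`D_{N+2}(x)` of length `N + 2`, both the forward difference over two steps and the second
difference factor through `D_N(x)`, leaving a polynomial of degree at most one in `x`:
`D_{N+2}(x+2) - D_{N+2}(x) = (N+2)(2x+1-N) D_N(x)` and
`D_{N+2}(x+2) - 2 D_{N+2}(x+1) + D_{N+2}(x) = (N+1)(N+2) D_N(x)`.
At `x = ξ + n` these give `μδ p_{n+2} = q_{n+1}` and `δ² p_{n+2} = p_{n+1}`; `p_1(ξ) = ξ` handles
the bottom of the recursion, and the iterates follow by induction.
-/

/-- `p_k(ξ) = (1/(2k−1)!)∏_{m=−(k−1)}^{k−1}(ξ−m)` for `k ≥ 1`, with `p_0 ≡ 0`. -/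
noncomputable def pPoly (k : ℕ) (ξ : ℝ) : ℝ :=
  if k = 0 then 0 else
    (1 / (Nat.factorial (2 * k - 1) : ℝ)) *
      ∏ m ∈ Finset.Icc (-(k : ℤ) + 1) ((k : ℤ) - 1), (ξ - (m : ℝ))

/-- `q_k(ξ) = (ξ/(2k)) p_k(ξ)` for `k ≥ 1`, with `q_0 ≡ 1`. -/
noncomputable def qPoly (k : ℕ) (ξ : ℝ) : ℝ :=
  if k = 0 then 1 else ξ / (2 * k) * pPoly k ξ

/-- Second central difference with unit step: `δ²f(ξ) = f(ξ+1) − 2f(ξ) + f(ξ−1)`. -/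
def d2 (f : ℝ → ℝ) : ℝ → ℝ := fun ξ => f (ξ + 1) - 2 * f ξ + f (ξ - 1)

/-- Centred mean-difference with unit step: `μδ f(ξ) = (f(ξ+1) − f(ξ−1))/2`. -/
noncomputable def md (f : ℝ → ℝ) : ℝ → ℝ := fun ξ => (f (ξ + 1) - f (ξ - 1)) / 2

open Finset Polynomial Nat

section descPochhammer

variable {R : Type*} [CommRing R]

theorem descPochhammer_succ_eval_add_one (n : ℕ) (x : R) :
    (descPochhammer R (n + 1)).eval (x + 1) = (x + 1) * (descPochhammer R n).eval x := by
  simp [descPochhammer_succ_left]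

theorem descPochhammer_add_two_eval_add_two (N : ℕ) (x : R) :
    (descPochhammer R (N + 2)).eval (x + 2) = (x + 2) * (x + 1) * (descPochhammer R N).eval x := by
  rw [← one_add_one_eq_two, ← add_assoc, descPochhammer_succ_eval_add_one,
    descPochhammer_succ_eval_add_one, mul_assoc]

theorem descPochhammer_add_two_eval_add_one (N : ℕ) (x : R) :
    (descPochhammer R (N + 2)).eval (x + 1) = (x + 1) * (x - N) * (descPochhammer R N).eval x := by
  rw [descPochhammer_succ_eval_add_one, descPochhammer_succ_eval]
  ring

theorem descPochhammer_add_two_eval (N : ℕ) (x : R) :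
    (descPochhammer R (N + 2)).eval x = (x - N) * (x - (N + 1)) * (descPochhammer R N).eval x := by
  rw [descPochhammer_succ_eval, descPochhammer_succ_eval]
  push_cast
  ring

theorem descPochhammer_add_two_eval_add_two_sub (N : ℕ) (x : R) :
    (descPochhammer R (N + 2)).eval (x + 2) - (descPochhammer R (N + 2)).eval x =
      (N + 2) * (2 * x + 1 - N) * (descPochhammer R N).eval x := by
  rw [descPochhammer_add_two_eval_add_two, descPochhammer_add_two_eval]
  ring

theorem descPochhammer_add_two_second_difference (N : ℕ) (x : R) :
    (descPochhammer R (N + 2)).eval (x + 2) - 2 * (descPochhammer R (N + 2)).eval (x + 1) +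
        (descPochhammer R (N + 2)).eval x =
      (N + 1) * (N + 2) * (descPochhammer R N).eval x := by
  rw [descPochhammer_add_two_eval_add_two, descPochhammer_add_two_eval_add_one,
    descPochhammer_add_two_eval]
  ring

end descPochhammer

theorem pPoly_zero : pPoly 0 = 0 := by
  funext ξ
  simp [pPoly]

theorem pPoly_succ (n : ℕ) (ξ : ℝ) :
    pPoly (n + 1) ξ = (descPochhammer ℝ (2 * n + 1)).eval (ξ + n) / (2 * n + 1)! := by
  rw [pPoly, if_neg n.succ_ne_zero, descPochhammer_eval_eq_prod_range, one_div_mul_eq_div,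
    show 2 * (n + 1) - 1 = 2 * n + 1 by omega]
  congr 1
  symm
  refine prod_nbij' (fun i => (i : ℤ) - n) (fun m => (m + n).toNat) ?_ ?_ ?_ ?_ ?_
  all_goals intros; simp_all only [mem_range, mem_Icc]
  · push_cast; omega
  any_goals omega
  push_cast; ring

theorem pPoly_one (ξ : ℝ) : pPoly 1 ξ = ξ := by
  simpa using pPoly_succ 0 ξ

theorem pPoly_add_two (n : ℕ) (ξ : ℝ) :
    pPoly (n + 2) ξ = (descPochhammer ℝ (2 * n + 1 + 2)).eval (ξ + n + 1) /
      ((2 * n + 3) * (2 * n + 2) * (2 * n + 1)!) := by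
  rw [pPoly_succ, show 2 * (n + 1) + 1 = 2 * n + 1 + 2 by ring, factorial_succ, factorial_succ]
  push_cast
  ring_nf

theorem d2_pPoly (k : ℕ) : d2 (pPoly k) = pPoly (k - 1) := by
  funext ξ
  rcases k with _ | _ | n
  · simp [d2, pPoly_zero]
  · simp only [d2, zero_add, pPoly_one, tsub_self, pPoly_zero, Pi.zero_apply]
    ring
  have key := descPochhammer_add_two_second_difference (R := ℝ) (2 * n + 1) (ξ + n)
  simp only [d2, pPoly_add_two, add_tsub_cancel_right, pPoly_succ]
  rw [show ξ + 1 + n + 1 = ξ + n + 2 by ring, show ξ - 1 + n + 1 = ξ + n by ring]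
  field_simp
  push_cast at key
  linear_combination key

theorem md_pPoly_succ (n : ℕ) : md (pPoly (n + 1)) = qPoly n := by
  funext ξ
  rcases n with _ | n
  · simp [md, qPoly, pPoly_one]
  have key := descPochhammer_add_two_eval_add_two_sub (R := ℝ) (2 * n + 1) (ξ + n)
  simp only [md, qPoly, if_neg n.succ_ne_zero, pPoly_add_two, pPoly_succ]
  rw [show ξ + 1 + n + 1 = ξ + n + 2 by ring, show ξ - 1 + n + 1 = ξ + n by ring]
  field_simp
  push_cast at key ⊢
  linear_combination (n + 1 : ℝ) * key

theorem iterate_d2_pPoly (j k : ℕ) : d2^[j] (pPoly k) = pPoly (k - j) := by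
  induction j with
  | zero => rfl
  | succ j ih => rw [Function.iterate_succ_apply', ih, d2_pPoly, Nat.sub_sub]

/-- `μδ p_k = q_{k−1}`, and iterating with `δ²p_k = p_{k−1}`:
`μδ^{2m−1} p_k = q_{k−m}` pointwise for `1 ≤ m ≤ k`, zero for `m > k`. -/
theorem mean_difference_iterates (k : ℕ) (hk : 1 ≤ k) :
    (∀ ξ : ℝ, md (pPoly k) ξ = qPoly (k - 1) ξ) ∧
    (∀ m : ℕ, 1 ≤ m → m ≤ k →
      ∀ ξ : ℝ, md (d2^[m - 1] (pPoly k)) ξ = qPoly (k - m) ξ) ∧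
    (∀ m : ℕ, k < m → ∀ ξ : ℝ, md (d2^[m - 1] (pPoly k)) ξ = 0) := by
  obtain ⟨n, rfl⟩ := Nat.exists_eq_add_of_le' hk
  refine ⟨congrFun (md_pPoly_succ n), fun m _ hmk => ?_, fun m hkm => ?_⟩
  · rw [iterate_d2_pPoly, show n + 1 - (m - 1) = n + 1 - m + 1 by omega, md_pPoly_succ]
    exact fun _ => rfl
  · intro ξ
    rw [iterate_d2_pPoly, show n + 1 - (m - 1) = 0 by omega, pPoly_zero]
    simp [md]
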